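/- Theorem A, part (1), in arithmetic form: let p, q, a, b : Fin 3 → ℤ satisfy p 1 + p 2 + p 3 = q 1 + q 2 + q 3 and a 1 + a 2 + a 3 = b 1 + b 2 + b 3. Assume: (i) N σ ≠ 0 for every permutation σ of {1,2,3} (the torus action is almost free); (ii) the gcd of all 2×2 minors (p i − q j)·(a k − b l) − (p k − q l)·(a i − b j), taken over pairs of index pairs (i,j) ≠ (k,l) with i ≠ j and k ≠ l, equals 1 (the action is effective); (iii) for some i ≠ j the closed segment between Q i and Q j in ℝ² is disjoint from the convex hull of {P 1, P 2, P 3} (the orbifold carries a positively curved Eschenburg metric); (iv) there exists a permutation σ with |N σ| > 1 (the singular set is nonempty). Then there exist an even permutation σ with |N σ| > 1 and an odd permutation τ with |N τ| > 1; i.e. the singular set contains a vertex of each parity. -/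

import Mathlib

/-!
Put `P r = (p r, a r)` and `Q c = (q c, b c)` in `ℤ²`, so that
`N σ = cross (P 0 - Q (σ 0)) (P 1 - Q (σ 1))`. As `∑ P = ∑ Q`, the vectors `P r - Q (σ r)` sum to
zero and therefore have equal consecutive cross products. Hence, for the pair `Q i, Q j` of the
curvature condition, the orders of one parity are the numbers `cross (P r - Q i) (P (r+1) - Q j)`
and those of the other parity are `cross (P r - Q j) (P (r+1) - Q i)`, with `r ∈ ℤ/3`.

A linear functional `f` separating `[Q i, Q j]` from the hull of the `P r` puts `A r = P r - Q i`
and `A r - D`, where `D = Q j - Q i`, in the open half-plane `f > 0`. Suppose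
`|cross (A r) (A (r+1) - D)| = 1` for all `r` and let `g r = cross D (A r)`. If some `g r` vanishes,
`D` is an integer multiple of the primitive vector `A r`, and `|cross (A (r-1)) (A r - D)| = 1`
together with the half-plane forces `D = 0`. A sign change `g r < 0 < g (r+1)` is impossible,
since `f D * cross x y` is then positive for `x ∈ {A r, A r - D}` and `y ∈ {A (r+1), A (r+1) - D}`.
If all `g r` have the same sign, the identity `∑ cross (A r) (A (r+1)) * g (r+2) = 0` forces
`|g r| = 1`, and then `cross (A r - D) (A (r+1)) = ±1`. So if no vertex of one parity is singular,
no vertex is.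
-/

/-- The planar point associated to a pair of integer Eschenburg parameters. -/
noncomputable def eschPt (x y : ℤ) : EuclideanSpace ℝ (Fin 2) := WithLp.toLp 2 ![(x : ℝ), (y : ℝ)]

/-- The signed order `N σ` of the isotropy group at the vertex `∗_σ`. -/
def eschN (p q a b : Fin 3 → ℤ) (σ : Equiv.Perm (Fin 3)) : ℤ :=
  (p 0 - q (σ 0)) * (a 1 - b (σ 1)) - (p 1 - q (σ 1)) * (a 0 - b (σ 0))

/-- The gcd of all `2 × 2` minors `(p i − q j)·(a k − b l) − (p k − q l)·(a i − b j)` over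
pairs of index pairs `(i,j) ≠ (k,l)` with `i ≠ j`, `k ≠ l`; the torus action is effective
iff this gcd is `1`. -/
def eschMinorGcd (p q a b : Fin 3 → ℤ) : ℤ :=
  Finset.gcd
    ((Finset.univ : Finset ((Fin 3 × Fin 3) × (Fin 3 × Fin 3))).filter
      fun x => x.1 ≠ x.2 ∧ x.1.1 ≠ x.1.2 ∧ x.2.1 ≠ x.2.2)
    fun x => (p x.1.1 - q x.1.2) * (a x.2.1 - b x.2.2) -
      (p x.2.1 - q x.2.2) * (a x.1.1 - b x.1.2)

open Equiv

-- The second product is written `v.1 * u.2` so that `eschN p q a b σ` unfolds to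
-- `cross ((p 0, a 0) - (q (σ 0), b (σ 0))) ((p 1, a 1) - (q (σ 1), b (σ 1)))`.
def cross {R : Type*} [CommRing R] (u v : R × R) : R := u.1 * v.2 - v.1 * u.2

section CommRing

variable {R : Type*} [CommRing R]

lemma cross_smul_eq (x y z : R × R) : cross x y • z = cross z y • x - cross z x • y := by
  ext <;> simp only [cross, Prod.smul_fst, Prod.smul_snd, Prod.fst_sub, Prod.snd_sub,
    smul_eq_mul] <;> ring

lemma cross_eq_of_sum_eq_zero {u : Fin 3 → R × R} (h : ∑ r, u r = 0) (r : Fin 3) :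
    cross (u r) (u (r + 1)) = cross (u 0) (u 1) := by
  rw [Fin.sum_univ_three] at h
  have hu2 : u 2 = -(u 0 + u 1) := eq_neg_of_add_eq_zero_right h
  fin_cases r <;>
    simp only [cross, hu2, Fin.zero_eta, Fin.mk_one, Fin.reduceFinMk, Fin.isValue, Fin.reduceAdd,
      zero_add, neg_add_rev, Prod.fst_add, Prod.fst_neg, Prod.snd_add, Prod.snd_neg] <;> ring

end CommRing

lemma exists_eq_zsmul_of_cross_eq_zero {x w D : ℤ × ℤ} (hxw : |cross x w| = 1)
    (hD : cross D x = 0) : ∃ k : ℤ, D = k • x := by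
  refine ⟨cross x w * cross D w, ?_⟩
  have hsq : cross x w * cross x w = 1 := by rw [← abs_mul_abs_self, hxw, one_mul]
  have hsmul := cross_smul_eq x w D
  rw [hD, zero_smul, sub_zero] at hsmul
  calc D = (cross x w * cross x w) • D := by rw [hsq, one_smul]
    _ = (cross x w * cross D w) • x := by rw [mul_smul, hsmul, smul_smul]

section Functional

variable (f : ℤ × ℤ →+ ℝ)

lemma cross_mul_map_eq (x y z : ℤ × ℤ) :
    ((cross x y : ℤ) : ℝ) * f z = (cross z y : ℤ) * f x - (cross z x : ℤ) * f y := by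
  have h := congrArg f (cross_smul_eq x y z)
  rwa [map_sub, map_zsmul, map_zsmul, map_zsmul, zsmul_eq_mul, zsmul_eq_mul, zsmul_eq_mul] at h

lemma eq_zero_of_cross_eq_zero {x w z D : ℤ × ℤ} (hx : 0 < f x) (hxD : 0 < f (x - D))
    (hxw : |cross x w| = 1) (hzx : |cross z (x - D)| = 1) (hD : cross D x = 0) : D = 0 := by
  obtain ⟨k, rfl⟩ := exists_eq_zsmul_of_cross_eq_zero hxw hD
  have hsub : x - k • x = (1 - k) • x := by rw [sub_smul, one_smul]
  rw [hsub, map_zsmul, zsmul_eq_mul] at hxD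
  have hk : 0 < 1 - k := by exact_mod_cast pos_of_mul_pos_left hxD hx.le
  have hcross : cross z ((1 - k) • x) = (1 - k) * cross z x := by
    simp only [cross, Prod.smul_fst, Prod.smul_snd, smul_eq_mul]; ring
  rw [hsub, hcross, ← Int.isUnit_iff_abs_eq] at hzx
  rcases Int.isUnit_iff.mp (isUnit_of_mul_isUnit_left hzx) with h | h
  · rw [show k = 0 by omega, zero_smul]
  · omega

lemma false_of_cross_neg_of_cross_pos {x y D : ℤ × ℤ} (hx : 0 < f x) (hy : 0 < f y)
    (hxD : 0 < f (x - D)) (hyD : 0 < f (y - D)) (he : |cross x (y - D)| ≤ 1)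
    (hDx : cross D x < 0) (hDy : 0 < cross D y) : False := by
  have key : ∀ x' y', cross D x' = cross D x → cross D y' = cross D y → 0 < f x' → 0 < f y' →
      0 < ((cross x' y' : ℤ) : ℝ) * f D := by
    intro x' y' hx' hy' hfx hfy
    have hDx' : ((cross D x : ℤ) : ℝ) < 0 := by exact_mod_cast hDx
    have hDy' : (0 : ℝ) < (cross D y : ℤ) := by exact_mod_cast hDy
    rw [cross_mul_map_eq, hx', hy']
    nlinarith
  have hDsub : ∀ v, cross D (v - D) = cross D v := fun v => by
    simp only [cross, Prod.fst_sub, Prod.snd_sub]; ring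
  have h1 := key x y rfl rfl hx hy
  have h2 := key x (y - D) rfl (hDsub y) hx hyD
  have h3 := key (x - D) (y - D) (hDsub x) (hDsub y) hxD hyD
  have hxy : cross x y = cross x (y - D) - cross D x := by
    simp only [cross, Prod.fst_sub, Prod.snd_sub]; ring
  have hxDyD : cross (x - D) (y - D) = cross x (y - D) - cross D y := by
    simp only [cross, Prod.fst_sub, Prod.snd_sub]; ring
  have he' := abs_le.mp he
  rcases lt_trichotomy (f D) 0 with hL | hL | hL
  · have : cross x y < 0 := by exact_mod_cast neg_of_mul_pos_left h1 hL.le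
    omega
  · simp [hL] at h1
  · have : 0 < cross (x - D) (y - D) := by exact_mod_cast pos_of_mul_pos_left h3 hL.le
    omega

end Functional

lemma forall_pos_or_forall_neg_or_exists_neg_pos {g : Fin 3 → ℤ} (hg : ∀ r, g r ≠ 0) :
    (∀ r, 0 < g r) ∨ (∀ r, g r < 0) ∨ ∃ r, g r < 0 ∧ 0 < g (r + 1) := by
  rcases (hg 0).lt_or_gt with h0 | h0 <;> rcases (hg 1).lt_or_gt with h1 | h1 <;>
    rcases (hg 2).lt_or_gt with h2 | h2
  all_goals first
    | (left; intro r; fin_cases r <;> assumption)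
    | (right; left; intro r; fin_cases r <;> assumption)
    | exact .inr <| .inr ⟨0, h0, h1⟩
    | exact .inr <| .inr ⟨1, h1, h2⟩
    | exact .inr <| .inr ⟨2, h2, h0⟩

lemma abs_sub_sub_le_one_of_pos {e g : Fin 3 → ℤ} (h : ∑ r, (e r - g r) * g (r + 2) = 0)
    (he : ∀ r, e r ≤ 1) (hg : ∀ r, 0 < g r) (r : Fin 3) : |e r - g r - g (r + 1)| ≤ 1 := by
  simp only [Fin.sum_univ_three, Fin.isValue, zero_add, Fin.reduceAdd] at h
  have h0 := hg 0; have h1 := hg 1; have h2 := hg 2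
  -- `∑ g r * g (r + 2) = ∑ e r * g (r + 2) ≤ ∑ g r`, while `g r * g s ≥ g r + g s - 1`.
  have hg_le : g 0 + g 1 + g 2 ≤ 3 := by nlinarith [he 0, he 1, he 2]
  obtain ⟨hg0, hg1, hg2⟩ : g 0 = 1 ∧ g 1 = 1 ∧ g 2 = 1 := by omega
  rw [hg0, hg1, hg2] at h
  have := he 0; have := he 1; have := he 2
  obtain ⟨he0, he1, he2⟩ : e 0 = 1 ∧ e 1 = 1 ∧ e 2 = 1 := by omega
  fin_cases r <;> simp [he0, he1, he2, hg0, hg1, hg2]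

theorem abs_cross_sub_le_one (f : ℤ × ℤ →+ ℝ) {A : Fin 3 → ℤ × ℤ} {D : ℤ × ℤ}
    (hA : ∀ r, 0 < f (A r)) (hAD : ∀ r, 0 < f (A r - D))
    (he : ∀ r, |cross (A r) (A (r + 1) - D)| = 1) (r : Fin 3) :
    |cross (A r - D) (A (r + 1))| ≤ 1 := by
  set e : Fin 3 → ℤ := fun r => cross (A r) (A (r + 1) - D)
  set g : Fin 3 → ℤ := fun r => cross D (A r)
  have ho : cross (A r - D) (A (r + 1)) = e r - g r - g (r + 1) := by
    simp only [e, g, cross, Prod.fst_sub, Prod.snd_sub]; ring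
  have hsum : ∑ r, (e r - g r) * g (r + 2) = 0 := by
    simp only [Fin.sum_univ_three, Fin.isValue, zero_add, Fin.reduceAdd, e, g, cross,
      Prod.fst_sub, Prod.snd_sub]
    ring
  rw [ho]
  by_cases hz : ∃ s, g s = 0
  · obtain ⟨s, hs⟩ := hz
    have hs2 : s + 2 + 1 = s := by rw [add_assoc, show (2 + 1 : Fin 3) = 0 from rfl, add_zero]
    obtain rfl : D = 0 :=
      eq_zero_of_cross_eq_zero f (hA s) (hAD s) (he s) (by simpa [hs2] using he (s + 2)) hs
    simpa [e, g, cross] using (he r).le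
  push Not at hz
  rcases forall_pos_or_forall_neg_or_exists_neg_pos hz with hpos | hneg | ⟨s, hs, hs'⟩
  · exact abs_sub_sub_le_one_of_pos hsum (fun r => (abs_le.mp (he r).le).2) hpos r
  · have := abs_sub_sub_le_one_of_pos (e := -e) (g := -g)
      (by simp only [Pi.neg_apply, ← hsum]; exact Finset.sum_congr rfl fun r _ => by ring)
      (fun r => neg_le.mp (abs_le.mp (he r).le).1) (fun r => neg_pos.mpr (hneg r)) r
    rwa [← abs_neg, show -(e r - g r - g (r + 1)) = -e r - -g r - -g (r + 1) by ring]
  · exact (false_of_cross_neg_of_cross_pos f (hA s) (hA (s + 1)) (hAD s) (hAD (s + 1))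
      (he s).le hs hs').elim

lemma sign_eq_iff_exists_apply_add_one (σ τ : Perm (Fin 3)) :
    Perm.sign τ = Perm.sign σ ↔ ∃ r, τ r = σ 0 ∧ τ (r + 1) = σ 1 := by
  revert σ τ; decide

lemma exists_perm_apply_zero_apply_one {i j : Fin 3} (hij : i ≠ j) :
    ∃ σ : Perm (Fin 3), σ 0 = i ∧ σ 1 = j := by
  revert i j; decide

section Vertices

variable (f : ℤ × ℤ →+ ℝ) {P Q : Fin 3 → ℤ × ℤ}

lemma cross_sub_eq_cross_sub (hPQ : ∑ r, P r = ∑ r, Q r) (τ : Perm (Fin 3)) (r : Fin 3) :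
    cross (P 0 - Q (τ 0)) (P 1 - Q (τ 1)) =
      cross (P r - Q (τ r)) (P (r + 1) - Q (τ (r + 1))) := by
  refine (cross_eq_of_sum_eq_zero (u := fun r => P r - Q (τ r)) ?_ r).symm
  rw [Finset.sum_sub_distrib, Equiv.sum_comp τ Q, hPQ, sub_self]

lemma abs_cross_le_one_of_sign (hPQ : ∑ r, P r = ∑ r, Q r) (σ : Perm (Fin 3))
    (hf : ∀ r, f (Q (σ 0)) < f (P r) ∧ f (Q (σ 1)) < f (P r))
    (h : ∀ τ : Perm (Fin 3), Perm.sign τ = Perm.sign σ →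
      |cross (P 0 - Q (τ 0)) (P 1 - Q (τ 1))| = 1)
    (τ : Perm (Fin 3)) : |cross (P 0 - Q (τ 0)) (P 1 - Q (τ 1))| ≤ 1 := by
  by_cases hτ : Perm.sign τ = Perm.sign σ
  · exact (h τ hτ).le
  have he : ∀ r, |cross (P r - Q (σ 0)) (P (r + 1) - Q (σ 0) - (Q (σ 1) - Q (σ 0)))| = 1 := by
    intro r
    obtain ⟨τ', hτ'⟩ : ∃ τ' : Perm (Fin 3), τ' r = σ 0 ∧ τ' (r + 1) = σ 1 :=
      ⟨σ * Equiv.addRight (-r), by simp, by simp⟩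
    rw [sub_sub_sub_cancel_right, ← hτ'.1, ← hτ'.2, ← cross_sub_eq_cross_sub hPQ]
    exact h τ' ((sign_eq_iff_exists_apply_add_one σ τ').mpr ⟨r, hτ'⟩)
  have hsw : Perm.sign τ = Perm.sign (σ * swap 0 1) := by
    rw [Perm.sign_mul, Perm.sign_swap (by decide), mul_neg_one, ← Int.units_ne_iff_eq_neg]
    exact hτ
  obtain ⟨r, h0, h1⟩ := (sign_eq_iff_exists_apply_add_one _ τ).mp hsw
  have hcore := abs_cross_sub_le_one f (A := fun r => P r - Q (σ 0)) (D := Q (σ 1) - Q (σ 0))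
    (fun r => by rw [map_sub, sub_pos]; exact (hf r).1)
    (fun r => by rw [sub_sub_sub_cancel_right, map_sub, sub_pos]; exact (hf r).2) he r
  rw [cross_sub_eq_cross_sub hPQ τ r, h0, h1]
  simpa [sub_sub_sub_cancel_right] using hcore

lemma abs_cross_le_one_of_forall_sign_eq (hPQ : ∑ r, P r = ∑ r, Q r) {i j : Fin 3} (hij : i ≠ j)
    (hf : ∀ r, f (Q i) < f (P r) ∧ f (Q j) < f (P r)) (s : ℤˣ)
    (h : ∀ τ : Perm (Fin 3), Perm.sign τ = s → |cross (P 0 - Q (τ 0)) (P 1 - Q (τ 1))| = 1)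
    (τ : Perm (Fin 3)) : |cross (P 0 - Q (τ 0)) (P 1 - Q (τ 1))| ≤ 1 := by
  obtain ⟨σ, rfl, rfl⟩ := exists_perm_apply_zero_apply_one hij
  rcases eq_or_ne (Perm.sign σ) s with rfl | hs
  · exact abs_cross_le_one_of_sign f hPQ σ hf h τ
  · refine abs_cross_le_one_of_sign f hPQ (σ * swap 0 1) (by simpa [and_comm] using hf)
      (fun τ hτ => h τ ?_) τ
    rw [hτ, Perm.sign_mul, Perm.sign_swap (by decide), mul_neg_one,
      Int.units_ne_iff_eq_neg.mp hs.symm]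

end Vertices

theorem exists_lt_of_disjoint_segment_convexHull {E ι : Type*} [NormedAddCommGroup E]
    [NormedSpace ℝ E] [Finite ι] {x y : E} {P : ι → E}
    (h : Disjoint (segment ℝ x y) (convexHull ℝ (Set.range P))) :
    ∃ g : StrongDual ℝ E, ∀ r, g x < g (P r) ∧ g y < g (P r) := by
  obtain ⟨g, u, v, hgu, huv, hgv⟩ := geometric_hahn_banach_compact_closed (convex_segment x y)
    (convexHull_pair (𝕜 := ℝ) x y ▸ (Set.toFinite _).isCompact_convexHull (𝕜 := ℝ))
    (convex_convexHull ℝ _)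
    ((Set.finite_range P).isClosed_convexHull (𝕜 := ℝ)) h
  have hlt : ∀ z ∈ segment ℝ x y, ∀ r, g z < g (P r) := fun z hz r =>
    (hgu z hz).trans (huv.trans (hgv _ (subset_convexHull ℝ _ ⟨r, rfl⟩)))
  exact ⟨g, fun r => ⟨hlt x (left_mem_segment ℝ x y) r, hlt y (right_mem_segment ℝ x y) r⟩⟩

noncomputable def eschPtHom : ℤ × ℤ →+ EuclideanSpace ℝ (Fin 2) where
  toFun v := eschPt v.1 v.2
  map_zero' := by ext i; fin_cases i <;> simp [eschPt]
  map_add' v w := by ext i; fin_cases i <;> simp [eschPt]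

theorem singular_set_contains_both_parities_general
    (p q a b : Fin 3 → ℤ)
    (hpq : p 0 + p 1 + p 2 = q 0 + q 1 + q 2)
    (hab : a 0 + a 1 + a 2 = b 0 + b 1 + b 2)
    (hfree : ∀ σ : Equiv.Perm (Fin 3), eschN p q a b σ ≠ 0)
    (hpos : ∃ i j : Fin 3, i ≠ j ∧
      Disjoint (segment ℝ (eschPt (q i) (b i)) (eschPt (q j) (b j)))
        (convexHull ℝ (Set.range fun i => eschPt (p i) (a i))))
    (hsing : ∃ σ : Equiv.Perm (Fin 3), 1 < |eschN p q a b σ|) :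
    (∃ σ : Equiv.Perm (Fin 3), Equiv.Perm.sign σ = 1 ∧ 1 < |eschN p q a b σ|) ∧
      ∃ τ : Equiv.Perm (Fin 3), Equiv.Perm.sign τ = -1 ∧ 1 < |eschN p q a b τ| := by
  obtain ⟨i, j, hij, hdisj⟩ := hpos
  obtain ⟨g, hg⟩ := exists_lt_of_disjoint_segment_convexHull hdisj
  have hPQ : ∑ r, (p r, a r) = ∑ r, (q r, b r) := by
    simp [Fin.sum_univ_three, hpq, hab]
  have key := abs_cross_le_one_of_forall_sign_eq (g.toLinearMap.toAddMonoidHom.comp eschPtHom)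
    hPQ hij hg
  obtain ⟨σ, hσ⟩ := hsing
  refine ⟨?_, ?_⟩ <;> by_contra! h <;>
    exact (key _ (fun τ hτ => le_antisymm (h τ hτ) (Int.one_le_abs (hfree τ))) σ).not_gt hσ

/-- **Theorem A, part (1), in arithmetic form.** For an effective, almost free, positively
curved Eschenburg orbifold with nonempty singular set, the singular set contains a vertex
of each parity: there is an even permutation and an odd permutation whose isotropy orders
exceed `1`. -/
theorem singular_set_contains_both_parities
    (p q a b : Fin 3 → ℤ)
    (hpq : p 0 + p 1 + p 2 = q 0 + q 1 + q 2)
    (hab : a 0 + a 1 + a 2 = b 0 + b 1 + b 2)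
    (hfree : ∀ σ : Equiv.Perm (Fin 3), eschN p q a b σ ≠ 0)
    (heff : eschMinorGcd p q a b = 1)
    (hpos : ∃ i j : Fin 3, i ≠ j ∧
      Disjoint (segment ℝ (eschPt (q i) (b i)) (eschPt (q j) (b j)))
        (convexHull ℝ (Set.range fun i => eschPt (p i) (a i))))
    (hsing : ∃ σ : Equiv.Perm (Fin 3), 1 < |eschN p q a b σ|) :
    (∃ σ : Equiv.Perm (Fin 3), Equiv.Perm.sign σ = 1 ∧ 1 < |eschN p q a b σ|) ∧
      ∃ τ : Equiv.Perm (Fin 3), Equiv.Perm.sign τ = -1 ∧ 1 < |eschN p q a b τ| :=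
  singular_set_contains_both_parities_general p q a b hpq hab hfree hpos hsing
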